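/- For all θ ∈ ℝ and all μ, ν ∈ {−1,+1}, the expectation value of Bob's single-qubit Hamiltonian in the normalized post-measurement state with the verifier applying U_B(ν,θ) after the prover measured outcome μ satisfies Tr[ρ(μ,ν,θ)·H₂] = (h/√(h²+k²))·[μν·k·sin 2θ + h·(1 − cos 2θ)]. -/

import Mathlib

open Matrix Kronecker
open scoped ComplexOrder

noncomputable section

abbrev M2 : Type := Matrix (Fin 2) (Fin 2) ℂ
abbrev M4 : Type := Matrix (Fin 2 × Fin 2) (Fin 2 × Fin 2) ℂ

/-- Pauli X matrix. -/
def σx : M2 := !![0, 1; 1, 0]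
/-- Pauli Y matrix. -/
def σy : M2 := !![0, -Complex.I; Complex.I, 0]
/-- Pauli Z matrix. -/
def σz : M2 := !![1, 0; 0, -1]

def X1 : M4 := σx ⊗ₖ (1 : M2)
def Z1 : M4 := σz ⊗ₖ (1 : M2)
def Z2 : M4 := (1 : M2) ⊗ₖ σz
def Y2 : M4 := (1 : M2) ⊗ₖ σy
def XX : M4 := σx ⊗ₖ σx

def H1m (k h : ℝ) : M4 := (h : ℂ) • Z1 + ((h ^ 2 / Real.sqrt (h ^ 2 + k ^ 2) : ℝ) : ℂ) • (1 : M4)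
def H2m (k h : ℝ) : M4 := (h : ℂ) • Z2 + ((h ^ 2 / Real.sqrt (h ^ 2 + k ^ 2) : ℝ) : ℂ) • (1 : M4)
def Vm (k h : ℝ) : M4 :=
  ((2 * k : ℝ) : ℂ) • XX + ((2 * k ^ 2 / Real.sqrt (h ^ 2 + k ^ 2) : ℝ) : ℂ) • (1 : M4)
def Hm (k h : ℝ) : M4 := H1m k h + H2m k h + Vm k h

def e00 : (Fin 2 × Fin 2) → ℂ := fun p => if p = (0, 0) then 1 else 0
def e11 : (Fin 2 × Fin 2) → ℂ := fun p => if p = (1, 1) then 1 else 0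

/-- the ground state of the minimal QET Hamiltonian -/
def gs (k h : ℝ) : (Fin 2 × Fin 2) → ℂ := fun p =>
  ((1 / Real.sqrt 2 * Real.sqrt (1 - h / Real.sqrt (h ^ 2 + k ^ 2)) : ℝ) : ℂ) * e00 p
  - ((1 / Real.sqrt 2 * Real.sqrt (1 + h / Real.sqrt (h ^ 2 + k ^ 2)) : ℝ) : ℂ) * e11 p

/-- the rank-one operator |g⟩⟨g| -/
def gProj (k h : ℝ) : M4 := Matrix.vecMulVec (gs k h) (star (gs k h))

/-- Alice's projective measurement operator -/
def PA (μ : ℝ) : M4 := (2 : ℂ)⁻¹ • ((1 : M4) + (μ : ℂ) • X1)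

/-- Bob's conditional unitary -/
def UB (ν θ : ℝ) : M4 :=
  ((Real.cos θ : ℝ) : ℂ) • (1 : M4) - ((Complex.I * ν * Real.sin θ) : ℂ) • Y2

/-- the post-protocol state -/
def ρQET (k h θ : ℝ) : M4 :=
  UB (-1) θ * PA (-1) * gProj k h * PA (-1) * (UB (-1) θ)ᴴ
  + UB 1 θ * PA 1 * gProj k h * PA 1 * (UB 1 θ)ᴴ

/-- the normalized post-measurement state with prover outcome μ and verifier operation UB ν θ -/
def ρMN (k h μ ν θ : ℝ) : M4 := (2 : ℂ) • (UB ν θ * PA μ * gProj k h * PA μ * (UB ν θ)ᴴ)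


/-! Bob's unitary acts on the second qubit only, so conjugating `H₂ = h Z₂ + h²/r` by it gives
`h cos 2θ Z₂ - h ν sin 2θ X₂ + h²/r`. The trace against the rank-one state then reduces to
expectations in Alice's post-measurement vector: writing `g = a|00⟩ - b|11⟩`, it is
`P_A(μ) g = ½ (a, -μ b, μ a, -b)`, in which `Z₂`, `X₂` and `1` have expectations
`(a² - b²)/2 = -h/(2r)`, `-μ a b = -μ k/(2r)` and `1/2`. -/

def X2 : M4 := (1 : M2) ⊗ₖ σx

lemma σx_conjTranspose : σxᴴ = σx := by
  ext i j
  fin_cases i <;> fin_cases j <;> simp [σx]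

lemma PA_conjTranspose (μ : ℝ) : (PA μ)ᴴ = PA μ := by
  simp [PA, X1, σx_conjTranspose, conjTranspose_kronecker]

section RankOne

variable {m n α : Type*} [Fintype n] [CommRing α] [StarRing α]

lemma mul_vecMulVec_star_mul_conjTranspose (A : Matrix m n α) (v : n → α) :
    A * vecMulVec v (star v) * Aᴴ = vecMulVec (A *ᵥ v) (star (A *ᵥ v)) := by
  rw [mul_vecMulVec, vecMulVec_mul, star_mulVec, vecMul_conjTranspose]

lemma trace_vecMulVec_star_mul (v : n → α) (B : Matrix n n α) :
    (vecMulVec v (star v) * B).trace = star v ⬝ᵥ B *ᵥ v := by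
  rw [vecMulVec_mul, trace_vecMulVec, dotProduct_comm, dotProduct_mulVec]

lemma trace_conj_vecMulVec_star_mul (A B : Matrix n n α) (v : n → α) :
    (A * vecMulVec v (star v) * Aᴴ * B).trace = star v ⬝ᵥ (Aᴴ * B * A) *ᵥ v := by
  rw [mul_vecMulVec_star_mul_conjTranspose, trace_vecMulVec_star_mul, star_mulVec,
    ← dotProduct_mulVec, mulVec_mulVec, mulVec_mulVec, Matrix.mul_assoc]

end RankOne

lemma trace_ρMN_mul (k h μ ν θ : ℝ) (B : M4) :
    (ρMN k h μ ν θ * B).trace =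
      2 * (star (PA μ *ᵥ gs k h) ⬝ᵥ ((UB ν θ)ᴴ * B * UB ν θ) *ᵥ (PA μ *ᵥ gs k h)) := by
  have hconj : PA μ * gProj k h * PA μ =
      vecMulVec (PA μ *ᵥ gs k h) (star (PA μ *ᵥ gs k h)) := by
    simpa only [gProj, PA_conjTranspose] using mul_vecMulVec_star_mul_conjTranspose (PA μ) (gs k h)
  rw [ρMN, Matrix.smul_mul, trace_smul, smul_eq_mul, Matrix.mul_assoc (UB ν θ * PA μ),
    Matrix.mul_assoc (UB ν θ), ← Matrix.mul_assoc (PA μ), hconj, trace_conj_vecMulVec_star_mul]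

section Kronecker

variable {l m n p α : Type*}

lemma kronecker_sub [Ring α] (A : Matrix l m α) (B C : Matrix n p α) :
    A ⊗ₖ (B - C) = A ⊗ₖ B - A ⊗ₖ C := by
  ext
  simp [mul_sub]

lemma one_kronecker_conjTranspose_mul_mul [Fintype m] [DecidableEq m] [Fintype n] [CommRing α]
    [StarRing α] (A B : Matrix n n α) :
    ((1 : Matrix m m α) ⊗ₖ A)ᴴ * ((1 : Matrix m m α) ⊗ₖ B) * ((1 : Matrix m m α) ⊗ₖ A) =
      (1 : Matrix m m α) ⊗ₖ (Aᴴ * B * A) := by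
  simp [conjTranspose_kronecker, ← mul_kronecker_mul]

end Kronecker

def yRot (c s : ℝ) : M2 := (c : ℂ) • (1 : M2) - (Complex.I * s) • σy

lemma UB_eq_one_kronecker_yRot (ν θ : ℝ) :
    UB ν θ = (1 : M2) ⊗ₖ yRot (Real.cos θ) (ν * Real.sin θ) := by
  simp only [UB, yRot, Y2, sub_eq_add_neg, ← neg_smul, kronecker_add, kronecker_smul,
    one_kronecker_one]
  push_cast
  ring_nf

lemma yRot_conjTranspose_mul_self (c s : ℝ) :
    (yRot c s)ᴴ * yRot c s = ((c ^ 2 + s ^ 2 : ℝ) : ℂ) • (1 : M2) := by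
  ext i j
  fin_cases i <;> fin_cases j <;>
    simp [yRot, σy, mul_apply, Fin.sum_univ_two] <;> ring_nf <;> simp

lemma yRot_conjTranspose_mul_σz_mul_self (c s : ℝ) :
    (yRot c s)ᴴ * σz * yRot c s =
      ((c ^ 2 - s ^ 2 : ℝ) : ℂ) • σz - ((2 * c * s : ℝ) : ℂ) • σx := by
  ext i j
  fin_cases i <;> fin_cases j <;>
    simp [yRot, σy, σz, σx, mul_apply, Fin.sum_univ_two] <;> ring_nf <;> simp

lemma UB_conjTranspose_mul_H2m_mul_UB (k h ν θ : ℝ) (hν : ν ^ 2 = 1) :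
    (UB ν θ)ᴴ * H2m k h * UB ν θ =
      ((h * Real.cos (2 * θ) : ℝ) : ℂ) • Z2 - ((h * ν * Real.sin (2 * θ) : ℝ) : ℂ) • X2
        + ((h ^ 2 / Real.sqrt (h ^ 2 + k ^ 2) : ℝ) : ℂ) • 1 := by
  have hZ : (UB ν θ)ᴴ * Z2 * UB ν θ =
      ((Real.cos (2 * θ) : ℝ) : ℂ) • Z2 - ((ν * Real.sin (2 * θ) : ℝ) : ℂ) • X2 := by
    rw [UB_eq_one_kronecker_yRot, Z2, X2, one_kronecker_conjTranspose_mul_mul,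
      yRot_conjTranspose_mul_σz_mul_self, kronecker_sub, kronecker_smul, kronecker_smul,
      Real.cos_two_mul, Real.sin_two_mul]
    congr 3
    · linear_combination (-Real.sin θ ^ 2) * hν - Real.sin_sq_add_cos_sq θ
    · ring
  have hU : (UB ν θ)ᴴ * UB ν θ = 1 := by
    rw [← Matrix.mul_one (UB ν θ)ᴴ, ← one_kronecker_one, UB_eq_one_kronecker_yRot,
      one_kronecker_conjTranspose_mul_mul, Matrix.mul_one, yRot_conjTranspose_mul_self,
      kronecker_smul, one_kronecker_one, mul_pow, hν, one_mul, Real.cos_sq_add_sin_sq,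
      Complex.ofReal_one, one_smul]
  rw [H2m, Matrix.mul_add, Matrix.add_mul, Matrix.mul_smul, Matrix.smul_mul, Matrix.mul_smul,
    Matrix.smul_mul, Matrix.mul_one, hZ, hU, smul_sub, smul_smul, smul_smul]
  push_cast
  ring_nf

def realVec4 (x y z t : ℝ) : Fin 2 × Fin 2 → ℂ := fun p => (!![x, y; z, t] p.1 p.2 : ℝ)

section RealVec4

variable (x y z t : ℝ)

lemma dotProduct_star_realVec4_self :
    star (realVec4 x y z t) ⬝ᵥ realVec4 x y z t = ((x ^ 2 + y ^ 2 + z ^ 2 + t ^ 2 : ℝ) : ℂ) := by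
  simp [realVec4, dotProduct, Fintype.sum_prod_type, Fin.sum_univ_two]
  ring

lemma dotProduct_star_realVec4_Z2_mulVec :
    star (realVec4 x y z t) ⬝ᵥ Z2 *ᵥ realVec4 x y z t =
      ((x ^ 2 - y ^ 2 + z ^ 2 - t ^ 2 : ℝ) : ℂ) := by
  simp [realVec4, Z2, σz, dotProduct, mulVec, Fintype.sum_prod_type, Fin.sum_univ_two,
    one_apply]
  ring

lemma dotProduct_star_realVec4_X2_mulVec :
    star (realVec4 x y z t) ⬝ᵥ X2 *ᵥ realVec4 x y z t = ((2 * (x * y + z * t) : ℝ) : ℂ) := by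
  simp [realVec4, X2, σx, dotProduct, mulVec, Fintype.sum_prod_type, Fin.sum_univ_two,
    one_apply]
  ring

lemma PA_mulVec_realVec4 (μ : ℝ) :
    PA μ *ᵥ realVec4 x y z t =
      realVec4 ((x + μ * z) / 2) ((y + μ * t) / 2) ((μ * x + z) / 2) ((μ * y + t) / 2) := by
  ext ⟨i, j⟩
  fin_cases i <;> fin_cases j <;>
    simp [realVec4, PA, X1, σx, mulVec, dotProduct, Fintype.sum_prod_type, Fin.sum_univ_two,
      one_apply] <;> ring

end RealVec4

def gsAmp₀ (k h : ℝ) : ℝ := 1 / Real.sqrt 2 * Real.sqrt (1 - h / Real.sqrt (h ^ 2 + k ^ 2))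

def gsAmp₁ (k h : ℝ) : ℝ := 1 / Real.sqrt 2 * Real.sqrt (1 + h / Real.sqrt (h ^ 2 + k ^ 2))

lemma gs_eq_realVec4 (k h : ℝ) : gs k h = realVec4 (gsAmp₀ k h) 0 0 (-gsAmp₁ k h) := by
  ext ⟨i, j⟩
  fin_cases i <;> fin_cases j <;> simp [gs, gsAmp₀, gsAmp₁, realVec4, e00, e11]

lemma abs_div_sqrt_sq_add_sq_le_one (h k : ℝ) : |h / Real.sqrt (h ^ 2 + k ^ 2)| ≤ 1 := by
  rw [abs_div, abs_of_nonneg (Real.sqrt_nonneg _)]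
  exact div_le_one_of_le₀ (Real.abs_le_sqrt (le_add_of_nonneg_right (sq_nonneg k)))
    (Real.sqrt_nonneg _)

lemma sq_gsAmp₀ (k h : ℝ) : gsAmp₀ k h ^ 2 = (1 - h / Real.sqrt (h ^ 2 + k ^ 2)) / 2 := by
  have := (abs_le.mp (abs_div_sqrt_sq_add_sq_le_one h k)).2
  rw [gsAmp₀, mul_pow, Real.sq_sqrt (by linarith), div_pow, Real.sq_sqrt zero_le_two]
  ring

lemma sq_gsAmp₁ (k h : ℝ) : gsAmp₁ k h ^ 2 = (1 + h / Real.sqrt (h ^ 2 + k ^ 2)) / 2 := by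
  have := (abs_le.mp (abs_div_sqrt_sq_add_sq_le_one h k)).1
  rw [gsAmp₁, mul_pow, Real.sq_sqrt (by linarith), div_pow, Real.sq_sqrt zero_le_two]
  ring

lemma gsAmp₀_mul_gsAmp₁ {k : ℝ} (hk : 0 < k) (h : ℝ) :
    gsAmp₀ k h * gsAmp₁ k h = k / (2 * Real.sqrt (h ^ 2 + k ^ 2)) := by
  have hr : 0 < Real.sqrt (h ^ 2 + k ^ 2) := Real.sqrt_pos.mpr (by positivity)
  have hle := (abs_le.mp (abs_div_sqrt_sq_add_sq_le_one h k)).2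
  have hprod : (1 - h / Real.sqrt (h ^ 2 + k ^ 2)) * (1 + h / Real.sqrt (h ^ 2 + k ^ 2)) =
      (k / Real.sqrt (h ^ 2 + k ^ 2)) ^ 2 := by
    field_simp
    linear_combination Real.sq_sqrt (by positivity : 0 ≤ h ^ 2 + k ^ 2)
  rw [gsAmp₀, gsAmp₁, mul_mul_mul_comm, ← Real.sqrt_mul (by linarith), hprod,
    Real.sqrt_sq (by positivity), one_div_mul_one_div, Real.mul_self_sqrt zero_le_two]
  field_simp

lemma PA_mulVec_gs (k h μ : ℝ) :
    PA μ *ᵥ gs k h = realVec4 (gsAmp₀ k h / 2) (-(μ * gsAmp₁ k h) / 2) (μ * gsAmp₀ k h / 2)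
      (-gsAmp₁ k h / 2) := by
  rw [gs_eq_realVec4, PA_mulVec_realVec4]
  congr 1 <;> ring

section PostMeasurement

variable (k h : ℝ) {μ : ℝ}

lemma dotProduct_star_PA_mulVec_gs_self (hμ : μ ^ 2 = 1) :
    star (PA μ *ᵥ gs k h) ⬝ᵥ PA μ *ᵥ gs k h = ((1 / 2 : ℝ) : ℂ) := by
  rw [PA_mulVec_gs, dotProduct_star_realVec4_self]
  congr 1
  linear_combination
    (gsAmp₀ k h ^ 2 + gsAmp₁ k h ^ 2) / 4 * hμ + sq_gsAmp₀ k h / 2 + sq_gsAmp₁ k h / 2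

lemma dotProduct_star_PA_mulVec_gs_Z2_mulVec (hμ : μ ^ 2 = 1) :
    star (PA μ *ᵥ gs k h) ⬝ᵥ Z2 *ᵥ PA μ *ᵥ gs k h =
      ((-h / (2 * Real.sqrt (h ^ 2 + k ^ 2)) : ℝ) : ℂ) := by
  rw [PA_mulVec_gs, dotProduct_star_realVec4_Z2_mulVec]
  congr 1
  linear_combination
    (gsAmp₀ k h ^ 2 - gsAmp₁ k h ^ 2) / 4 * hμ + sq_gsAmp₀ k h / 2 - sq_gsAmp₁ k h / 2

lemma dotProduct_star_PA_mulVec_gs_X2_mulVec (hk : 0 < k) :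
    star (PA μ *ᵥ gs k h) ⬝ᵥ X2 *ᵥ PA μ *ᵥ gs k h =
      ((-μ * k / (2 * Real.sqrt (h ^ 2 + k ^ 2)) : ℝ) : ℂ) := by
  rw [PA_mulVec_gs, dotProduct_star_realVec4_X2_mulVec]
  congr 1
  linear_combination (-μ) * gsAmp₀_mul_gsAmp₁ hk h

end PostMeasurement

theorem qet_H2_expectation_mu_nu_general (k h : ℝ) (hk : 0 < k) (θ : ℝ)
    (μ ν : ℝ) (hμ : μ ∈ ({-1, 1} : Set ℝ)) (hν : ν ∈ ({-1, 1} : Set ℝ)) :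
    (ρMN k h μ ν θ * H2m k h).trace =
      ((h / Real.sqrt (h ^ 2 + k ^ 2) *
        (μ * ν * k * Real.sin (2 * θ) + h * (1 - Real.cos (2 * θ))) : ℝ) : ℂ) := by
  have hμ2 : μ ^ 2 = 1 := by rcases hμ with rfl | rfl <;> norm_num
  have hν2 : ν ^ 2 = 1 := by rcases hν with rfl | rfl <;> norm_num
  rw [trace_ρMN_mul, UB_conjTranspose_mul_H2m_mul_UB k h ν θ hν2]
  simp only [add_mulVec, sub_mulVec, smul_mulVec, one_mulVec, dotProduct_add, dotProduct_sub,
    dotProduct_smul, smul_eq_mul, dotProduct_star_PA_mulVec_gs_Z2_mulVec k h hμ2,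
    dotProduct_star_PA_mulVec_gs_X2_mulVec k h hk, dotProduct_star_PA_mulVec_gs_self k h hμ2]
  push_cast
  ring

/-- `Tr[ρ(μ,ν,θ)·H₂] = (h/√(h²+k²))·[μν·k·sin 2θ + h·(1 − cos 2θ)]`. -/
theorem qet_H2_expectation_mu_nu (k h : ℝ) (hk : 0 < k) (hh : 0 < h) (θ : ℝ)
    (μ ν : ℝ) (hμ : μ ∈ ({-1, 1} : Set ℝ)) (hν : ν ∈ ({-1, 1} : Set ℝ)) :
    (ρMN k h μ ν θ * H2m k h).trace =
      ((h / Real.sqrt (h ^ 2 + k ^ 2) *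
        (μ * ν * k * Real.sin (2 * θ) + h * (1 - Real.cos (2 * θ))) : ℝ) : ℂ) :=
  qet_H2_expectation_mu_nu_general k h hk θ μ ν hμ hν
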